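/- Let k ≥ 2 and let PC_k^2 be the 2-set pancake permutation graph. Then the set Σ_{2k−1}^k of vertices v = v_0v_1⋯v_{2k−1} with v_0 = v_{2k−1} is an E-set of PC_k^2: it is an independent set, and every vertex of PC_k^2 not in Σ_{2k−1}^k has exactly one neighbor in Σ_{2k−1}^k. -/

import Mathlib

/-- A string of length `k*l` over the alphabet `Fin k` in which every symbol
occurs exactly `l` times (an `l`-set permutation). -/
def IsMSP (k l : ℕ) (v : Fin (k * l) → Fin k) : Prop :=
  ∀ a : Fin k, (Finset.univ.filter fun i => v i = a).card = l

/-- The vertex set of the star `l`-set transposition graph `ST_k^l`. -/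
abbrev MSP (k l : ℕ) : Type := {v : Fin (k * l) → Fin k // IsMSP k l v}

/-- Star-transposition adjacency: `w` is obtained from `v` by transposing position `0`
with a position `i ≠ 0` whose entry differs from that of position `0`. -/
def STAdj (k l : ℕ) (v w : Fin (k * l) → Fin k) : Prop :=
  ∃ i j : Fin (k * l), (j : ℕ) = 0 ∧ i ≠ j ∧ v i ≠ v j ∧ w = v ∘ Equiv.swap j i

/-- The star `l`-set transposition graph `ST_k^l`. -/
def STGraph (k l : ℕ) : SimpleGraph (MSP k l) :=
  SimpleGraph.fromRel fun v w => STAdj k l v.1 w.1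

/-- Pancake adjacency: `w` is obtained from `v` by reversing a prefix of length `m`,
`2 ≤ m ≤ k*l`, such that `v_{m-1} ≠ v_0`. -/
def PCAdj (k l : ℕ) (v w : Fin (k * l) → Fin k) : Prop :=
  ∃ m : ℕ, ∃ h2 : 2 ≤ m, ∃ hm : m ≤ k * l,
    v ⟨m - 1, by omega⟩ ≠ v ⟨0, by omega⟩ ∧
    (∀ i : Fin (k * l), ∀ _ : (i : ℕ) < m, w i = v ⟨m - 1 - (i : ℕ), by omega⟩) ∧
    (∀ i : Fin (k * l), m ≤ (i : ℕ) → w i = v i)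

/-- The 2-set pancake permutation graph `PC_k^2` (for general `l`: `PC_k^l`). -/
def PCGraph (k l : ℕ) : SimpleGraph (MSP k l) :=
  SimpleGraph.fromRel fun v w => PCAdj k l v.1 w.1

/-! Reversing the prefix of length `m < 2k` of `v` brings `v_{m-1}` to the front and keeps the last
symbol, whereas reversing the whole string exchanges `v_0` and `v_{2k-1}`. Hence a neighbour of `v`
lies in `Σ_{2k-1}^k` exactly when `m < 2k` and `v_{m-1} = v_{2k-1}`. If `v_0 = v_{2k-1}` this
contradicts the flip condition `v_{m-1} ≠ v_0`; otherwise the admissible `m - 1` are the positions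
other than `2k-1` carrying the symbol `v_{2k-1}`, and in a 2-set permutation there is exactly one. -/

section PrefixReversal

variable {N : ℕ}

-- Reversal of the prefix of length `m = j + 1`.
def prefixRev (j : Fin N) : Equiv.Perm (Fin N) :=
  Function.Involutive.toPerm (fun i => if i ≤ j then ⟨j - i, by omega⟩ else i) <| by
    intro i
    by_cases h : i ≤ j
    · have h' : (⟨j - i, by omega⟩ : Fin N) ≤ j := Fin.mk_le_of_le_val (Nat.sub_le _ _)
      simp only [h, h', if_true, Fin.ext_iff]
      rw [Fin.le_def] at h
      omega
    · simp [h]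

theorem prefixRev_apply_of_le {i j : Fin N} (h : i ≤ j) :
    prefixRev j i = ⟨j - i, by omega⟩ :=
  if_pos h

theorem prefixRev_apply_of_lt {i j : Fin N} (h : j < i) : prefixRev j i = i :=
  if_neg (not_le.2 h)

theorem prefixRev_apply_zero (j : Fin N) : prefixRev j ⟨0, j.pos⟩ = j := by
  rw [prefixRev_apply_of_le (Fin.le_def.2 (Nat.zero_le _))]
  simp

theorem prefixRev_apply_self (j : Fin N) : prefixRev j j = ⟨0, j.pos⟩ := by
  rw [prefixRev_apply_of_le le_rfl]
  simp

theorem prefixRev_prefixRev (j i : Fin N) : prefixRev j (prefixRev j i) = i :=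
  (prefixRev j).symm_apply_apply i

theorem apply_prefixRev_zero_eq_last_iff {α : Type*} (v : Fin N → α) {j lst : Fin N}
    (hlst : (lst : ℕ) + 1 = N) (hj : v j ≠ v ⟨0, j.pos⟩) :
    v (prefixRev j ⟨0, j.pos⟩) = v (prefixRev j lst) ↔ j ≠ lst ∧ v j = v lst := by
  rw [prefixRev_apply_zero]
  by_cases hjl : j = lst
  · subst hjl
    simpa [prefixRev_apply_self] using hj
  · have : j < lst := lt_of_le_of_ne (Fin.le_def.2 (by omega)) hjl
    simp [prefixRev_apply_of_lt this, hjl]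

end PrefixReversal

section PancakeGraph

variable {k l : ℕ}

theorem IsMSP.comp_perm {v : Fin (k * l) → Fin k} (hv : IsMSP k l v)
    (e : Equiv.Perm (Fin (k * l))) : IsMSP k l (v ∘ e) := by
  intro a
  have : (Finset.univ.filter fun i => (v ∘ e) i = a)
      = (Finset.univ.filter fun j => v j = a).map e.symm.toEmbedding := by
    ext i
    simp [eq_comm]
  rw [this, Finset.card_map, hv a]

theorem IsMSP.existsUnique_ne_and_apply_eq {v : Fin (k * 2) → Fin k} (hv : IsMSP k 2 v)
    (i : Fin (k * 2)) : ∃! j, j ≠ i ∧ v j = v i := by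
  have hmem : i ∈ Finset.univ.filter fun j => v j = v i := by simp
  have hcard : ((Finset.univ.filter fun j => v j = v i).erase i).card = 1 := by
    rw [Finset.card_erase_of_mem hmem, hv (v i)]
  obtain ⟨p, hp⟩ := Finset.card_eq_one.1 hcard
  have hp' : ∀ j, j ∈ (Finset.univ.filter fun j => v j = v i).erase i ↔ j = p := fun j => by
    rw [hp, Finset.mem_singleton]
  simp only [Finset.mem_erase, Finset.mem_filter, Finset.mem_univ, true_and] at hp'
  exact ⟨p, (hp' p).2 rfl, fun j hj => (hp' j).1 hj⟩

theorem pcAdj_iff {v w : Fin (k * l) → Fin k} :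
    PCAdj k l v w ↔ ∃ j : Fin (k * l), v j ≠ v ⟨0, j.pos⟩ ∧ w = v ∘ prefixRev j := by
  constructor
  · rintro ⟨m, h2, hm, hne, hrev, hfix⟩
    refine ⟨⟨m - 1, by omega⟩, hne, funext fun i => ?_⟩
    by_cases hi : (i : ℕ) < m
    · rw [hrev i hi, Function.comp_apply, prefixRev_apply_of_le (Fin.le_def.2 (by simp; omega))]
    · rw [hfix i (by omega), Function.comp_apply,
        prefixRev_apply_of_lt (Fin.lt_def.2 (by simp; omega))]
  · rintro ⟨j, hj, rfl⟩
    have hj0 : (j : ℕ) ≠ 0 := fun h => hj (congrArg v (Fin.ext h))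
    refine ⟨j + 1, by omega, j.isLt, by simpa using hj, fun i hi => ?_, fun i hi => ?_⟩
    · rw [Function.comp_apply, prefixRev_apply_of_le (Fin.le_def.2 (by omega))]
      congr 2
    · rw [Function.comp_apply, prefixRev_apply_of_lt (Fin.lt_def.2 (by omega))]

theorem PCAdj.symm {v w : Fin (k * l) → Fin k} (h : PCAdj k l v w) : PCAdj k l w v := by
  obtain ⟨j, hj, rfl⟩ := pcAdj_iff.1 h
  refine pcAdj_iff.2 ⟨j, ?_, funext fun i => ?_⟩
  · simpa [prefixRev_apply_self, prefixRev_apply_zero] using hj.symm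
  · simp [prefixRev_prefixRev]

theorem pcGraph_adj_iff {v w : MSP k l} : (PCGraph k l).Adj v w ↔ PCAdj k l v.1 w.1 := by
  refine ⟨fun ⟨_, h⟩ => h.elim id PCAdj.symm, fun h => ⟨?_, Or.inl h⟩⟩
  rintro rfl
  obtain ⟨j, hj, hv⟩ := pcAdj_iff.1 h
  exact hj (by simpa [prefixRev_apply_zero] using (congrFun hv ⟨0, j.pos⟩).symm)

theorem not_pcGraph_adj_of_first_eq_last {v u : MSP k l} {lst : Fin (k * l)}
    (hlst : (lst : ℕ) + 1 = k * l) (hv : v.1 ⟨0, lst.pos⟩ = v.1 lst)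
    (hu : u.1 ⟨0, lst.pos⟩ = u.1 lst) : ¬ (PCGraph k l).Adj v u := by
  rw [pcGraph_adj_iff, pcAdj_iff]
  rintro ⟨j, hj, hu'⟩
  rw [hu'] at hu
  exact hj (((apply_prefixRev_zero_eq_last_iff v.1 hlst hj).1 hu).2.trans hv.symm)

theorem pcGraph_adj_and_first_eq_last_iff {v u : MSP k l} {lst : Fin (k * l)}
    (hlst : (lst : ℕ) + 1 = k * l) (hv : v.1 ⟨0, lst.pos⟩ ≠ v.1 lst) :
    (PCGraph k l).Adj v u ∧ u.1 ⟨0, lst.pos⟩ = u.1 lst ↔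
      ∃ j, j ≠ lst ∧ v.1 j = v.1 lst ∧ u.1 = v.1 ∘ prefixRev j := by
  rw [pcGraph_adj_iff, pcAdj_iff]
  constructor
  · rintro ⟨⟨j, hj, hu⟩, hu0⟩
    rw [hu] at hu0
    obtain ⟨hjl, hjv⟩ := (apply_prefixRev_zero_eq_last_iff v.1 hlst hj).1 hu0
    exact ⟨j, hjl, hjv, hu⟩
  · rintro ⟨j, hjl, hjv, hu⟩
    have hj : v.1 j ≠ v.1 ⟨0, j.pos⟩ := hjv ▸ Ne.symm hv
    refine ⟨⟨j, hj, hu⟩, ?_⟩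
    rw [hu]
    exact (apply_prefixRev_zero_eq_last_iff v.1 hlst hj).2 ⟨hjl, hjv⟩

end PancakeGraph

/-- the set `Σ_{2k-1}^k` of vertices with `v_0 = v_{2k-1}` is an E-set of
`PC_k^2`: independent, and every outside vertex has exactly one neighbor in it. -/
theorem stmt19 (k : ℕ) (hk : 2 ≤ k)
    (Sig : Set (MSP k 2))
    (hSig : Sig = {v : MSP k 2 | v.1 ⟨0, by omega⟩ = v.1 ⟨k * 2 - 1, by omega⟩}) :
    (∀ v ∈ Sig, ∀ w ∈ Sig, ¬ (PCGraph k 2).Adj v w) ∧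
    (∀ v : MSP k 2, v ∉ Sig → ((PCGraph k 2).neighborSet v ∩ Sig).ncard = 1) := by
  subst hSig
  set lst : Fin (k * 2) := ⟨k * 2 - 1, by omega⟩
  have hlst : (lst : ℕ) + 1 = k * 2 := by simp only [lst]; omega
  refine ⟨fun v hv u hu => not_pcGraph_adj_of_first_eq_last hlst hv hu, fun v hv => ?_⟩
  obtain ⟨p, ⟨hpl, hpv⟩, hp⟩ := v.2.existsUnique_ne_and_apply_eq lst
  rw [Set.ncard_eq_one]
  refine ⟨⟨v.1 ∘ prefixRev p, v.2.comp_perm _⟩, Set.ext fun u => ?_⟩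
  simp only [Set.mem_inter_iff, SimpleGraph.mem_neighborSet, Set.mem_ofPred_eq,
    Set.mem_singleton_iff, Subtype.ext_iff]
  rw [pcGraph_adj_and_first_eq_last_iff hlst hv]
  constructor
  · rintro ⟨j, hjl, hjv, hu⟩
    rwa [hp j ⟨hjl, hjv⟩] at hu
  · exact fun hu => ⟨p, hpl, hpv, hu⟩
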